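/- Let a ∈ (0,1) and let x ∈ ℝ^K have all coordinates positive (with the convention x_0 = a). Then the pairwise balance condition — k'_i x_{k−e_i} x_{k'} = k_i x_k x_{k'−e_i} for every pair of edges (k,i), (k',i) ∈ M — holds if and only if x has a product-form representation, i.e. there exists ν ∈ ℝ^I such that x_k = (a/c_k)·exp(b·Σ_{i∈I} k_i ν_i) for all k ∈ K. -/

import Mathlib

/-!
Taking `k' = e_i` in the balance condition gives the recursion `x_{k-e_i} x_{e_i} = k_i x_k a`,
which determines `x` on the down-closed set `K̄` from its values at the unit vectors. The product
form satisfies the same recursion, because `c_k = k_i c_{k-e_i}`, and `ν_i` can be chosen so that it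
agrees with `x` at `e_i`. Conversely, the recursion at `k` and at `k'` yields the balance condition
for the pair `(k, i), (k', i)`.
-/

open Finset

/-- `c_k = ∏_i (k_i)!`. -/
noncomputable def confC {I : Type*} [Fintype I] (k : I → ℕ) : ℝ :=
  ∏ i, (Nat.factorial (k i) : ℝ)

/-- The coordinates of `x` extended by the convention `x_0 = a`. -/
def xeDef {I : Type*} [Fintype I]
    (a : ℝ) (x : (I → ℕ) → ℝ) (m : I → ℕ) : ℝ :=
  if m = 0 then a else x m

/-- The set of configurations `k` such that `(k, i)` is an edge. -/
def edgesF {I : Type*} [Fintype I] [DecidableEq I]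
    (Kbar : Finset (I → ℕ)) (i : I) : Finset (I → ℕ) :=
  (Kbar.erase 0).filter (fun k => 1 ≤ k i ∧ k - Pi.single i 1 ∈ Kbar)

lemma single_one_le {I : Type*} [DecidableEq I] {k : I → ℕ} {i : I} (hk : 1 ≤ k i) :
    Pi.single i 1 ≤ k := fun j => by
  rcases eq_or_ne j i with rfl | hj <;> simp_all

section

variable {I : Type*} [Fintype I]

lemma confC_pos (k : I → ℕ) : 0 < confC k :=
  prod_pos fun i _ => mod_cast (k i).factorial_pos

lemma confC_add_single [DecidableEq I] (m : I → ℕ) (i : I) :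
    confC (m + Pi.single i 1) = (m i + 1 : ℝ) * confC m := by
  rw [confC, confC, ← mul_prod_erase _ _ (mem_univ i), ← mul_prod_erase _ _ (mem_univ i),
    ← mul_assoc]
  congr 1
  · simp [Nat.factorial_succ]
  · exact prod_congr rfl fun j hj => by simp [(mem_erase.mp hj).1]

lemma sum_add_single_mul [DecidableEq I] (m : I → ℕ) (i : I) (ν : I → ℝ) :
    ∑ j, ((m + Pi.single i 1 : I → ℕ) j : ℝ) * ν j = ∑ j, (m j : ℝ) * ν j + ν i := by
  simp [add_mul, sum_add_distrib, Pi.single_apply]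

section Extension

variable (a : ℝ) (x : (I → ℕ) → ℝ)

@[simp]
lemma xeDef_zero : xeDef a x 0 = a := if_pos rfl

lemma xeDef_of_ne_zero {k : I → ℕ} (hk : k ≠ 0) : xeDef a x k = x k := if_neg hk

lemma xeDef_eqOn_iff {S : Finset (I → ℕ)} {y : (I → ℕ) → ℝ} (hy : y 0 = a) :
    (∀ k ∈ S, xeDef a x k = y k) ↔ ∀ k ∈ S.erase 0, x k = y k := by
  refine ⟨fun h k hk => ?_, fun h k hk => ?_⟩
  · obtain ⟨hk0, hkS⟩ := mem_erase.1 hk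
    rw [← h k hkS, xeDef_of_ne_zero a x hk0]
  · rcases eq_or_ne k 0 with rfl | hk0
    · rw [xeDef_zero, hy]
    · rw [xeDef_of_ne_zero a x hk0, h k (mem_erase.2 ⟨hk0, hk⟩)]

end Extension

noncomputable def productForm (a b : ℝ) (ν : I → ℝ) (k : I → ℕ) : ℝ :=
  a / confC k * Real.exp (b * ∑ i, (k i : ℝ) * ν i)

section ProductForm

variable (a b : ℝ) (ν : I → ℝ)

@[simp]
lemma productForm_zero : productForm a b ν 0 = a := by
  simp [productForm, confC]

lemma productForm_single [DecidableEq I] (i : I) :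
    productForm a b ν (Pi.single i 1) = a * Real.exp (b * ν i) := by
  simp [productForm, confC, Pi.single_apply, apply_ite]

lemma productForm_add_single [DecidableEq I] (m : I → ℕ) (i : I) :
    (m i + 1 : ℝ) * productForm a b ν (m + Pi.single i 1) * a =
      productForm a b ν m * productForm a b ν (Pi.single i 1) := by
  have hc := (confC_pos m).ne'
  rw [productForm, productForm, confC_add_single, sum_add_single_mul, productForm_single,
    mul_add, Real.exp_add]
  field_simp

end ProductForm

section Balance

variable [DecidableEq I]

lemma mem_edgesF_iff {S : Finset (I → ℕ)} (hS : IsLowerSet (S : Set (I → ℕ))) {i : I}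
    {k : I → ℕ} : k ∈ edgesF S i ↔ k ∈ S ∧ 1 ≤ k i := by
  refine ⟨fun hk => ?_, fun ⟨hkS, hki⟩ => ?_⟩
  · simp only [edgesF, mem_filter, mem_erase] at hk
    exact ⟨hk.1.2, hk.2.1⟩
  · have hk0 : k ≠ 0 := fun h => by simp [h] at hki
    exact mem_filter.2 ⟨mem_erase.2 ⟨hk0, hkS⟩, hki, hS tsub_le_self hkS⟩

/-- The balance condition restricted to pairs of edges one of which is `(e_i, i)`. -/
def UnitBalanced (S : Finset (I → ℕ)) (y : (I → ℕ) → ℝ) : Prop :=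
  ∀ i, ∀ k ∈ edgesF S i, y (k - Pi.single i 1) * y (Pi.single i 1) = k i * y k * y 0

lemma productForm_unitBalanced (a b : ℝ) (ν : I → ℝ) (S : Finset (I → ℕ)) :
    UnitBalanced S (productForm a b ν) := by
  intro i k hk
  have hki : 1 ≤ k i := (mem_filter.1 hk).2.1
  have h := productForm_add_single a b ν (k - Pi.single i 1) i
  rw [tsub_add_cancel_of_le (single_one_le hki)] at h
  have hcast : ((k - Pi.single i 1 : I → ℕ) i : ℝ) + 1 = k i := by
    simp [Nat.cast_sub hki]
  rw [hcast] at h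
  rw [productForm_zero, ← h]

lemma unitBalanced_of_balanced {S : Finset (I → ℕ)} (hS : IsLowerSet (S : Set (I → ℕ)))
    {y : (I → ℕ) → ℝ}
    (hy : ∀ i, ∀ k ∈ edgesF S i, ∀ k' ∈ edgesF S i,
      (k' i : ℝ) * y (k - Pi.single i 1) * y k' = k i * y k * y (k' - Pi.single i 1)) :
    UnitBalanced S y := by
  intro i k hk
  have hki := ((mem_edgesF_iff hS).1 hk)
  have hunit : Pi.single i 1 ∈ edgesF S i :=
    (mem_edgesF_iff hS).2 ⟨hS (single_one_le hki.2) hki.1, by simp⟩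
  simpa using hy i k hk _ hunit

lemma balanced_of_unitBalanced {S : Finset (I → ℕ)} {y : (I → ℕ) → ℝ} (hy0 : y 0 ≠ 0)
    (hy : UnitBalanced S y) {i : I} {k k' : I → ℕ} (hk : k ∈ edgesF S i)
    (hk' : k' ∈ edgesF S i) :
    (k' i : ℝ) * y (k - Pi.single i 1) * y k' = k i * y k * y (k' - Pi.single i 1) := by
  refine mul_right_cancel₀ hy0 ?_
  linear_combination y (k' - Pi.single i 1) * hy i k hk - y (k - Pi.single i 1) * hy i k' hk'

lemma eqOn_of_unitBalanced {S : Finset (I → ℕ)} (hS : IsLowerSet (S : Set (I → ℕ)))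
    {f g : (I → ℕ) → ℝ} (hf : UnitBalanced S f) (hg : UnitBalanced S g) (h0 : f 0 = g 0)
    (hf0 : f 0 ≠ 0) (hsingle : ∀ i, Pi.single i 1 ∈ S → f (Pi.single i 1) = g (Pi.single i 1)) :
    ∀ k ∈ S, f k = g k := by
  intro k
  induction k using WellFoundedLT.induction with
  | ind k ih =>
  intro hkS
  rcases eq_or_ne k 0 with rfl | hk0
  · exact h0
  obtain ⟨i, hki⟩ : ∃ i, 1 ≤ k i := by
    obtain ⟨i, hi⟩ := Function.ne_iff.1 hk0
    exact ⟨i, Nat.one_le_iff_ne_zero.2 hi⟩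
  have hk : k ∈ edgesF S i := (mem_edgesF_iff hS).2 ⟨hkS, hki⟩
  have hlt : k - Pi.single i 1 < k := by
    refine lt_of_le_of_ne tsub_le_self fun h => ?_
    have := congrFun h i
    simp only [Pi.sub_apply, Pi.single_eq_same] at this
    omega
  have hpred := ih _ hlt (hS tsub_le_self hkS)
  have hunit := hsingle i (hS (single_one_le hki) hkS)
  have hki0 : (k i : ℝ) ≠ 0 := by positivity
  have hf' := hf i k hk
  rw [hpred, hunit, hg i k hk, ← h0] at hf'
  exact mul_left_cancel₀ (mul_ne_zero hki0 hf0) (by linear_combination -hf')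

end Balance

end

theorem balance_iff_product_form_general
    {I : Type*} [Fintype I] [DecidableEq I]
    (Kbar : Finset (I → ℕ))
    (hmono : ∀ k ∈ Kbar, ∀ k' : I → ℕ, (∀ i, k' i ≤ k i) → k' ∈ Kbar)
    (a : ℝ) (ha : a ∈ Set.Ioo (0 : ℝ) 1)
    (b : ℝ) (hb : b = -Real.log a)
    (x : (I → ℕ) → ℝ) (hx : ∀ k ∈ Kbar.erase 0, 0 < x k) :
    (∀ i : I, ∀ k ∈ edgesF Kbar i, ∀ k' ∈ edgesF Kbar i,
        (k' i : ℝ) * xeDef a x (k - Pi.single i 1) * xeDef a x k' =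
          (k i : ℝ) * xeDef a x k * xeDef a x (k' - Pi.single i 1)) ↔
      ∃ ν : I → ℝ, ∀ k ∈ Kbar.erase 0,
        x k = (a / confC k) * Real.exp (b * ∑ i, (k i : ℝ) * ν i) := by
  have hS : IsLowerSet (Kbar : Set (I → ℕ)) := fun k k' hle hk => hmono k hk k' hle
  have ha0 : a ≠ 0 := ha.1.ne'
  constructor
  · intro hbal
    have hb0 : b ≠ 0 := hb ▸ neg_ne_zero.2 (Real.log_neg ha.1 ha.2).ne
    refine ⟨fun i => Real.log (x (Pi.single i 1) / a) / b,
      (xeDef_eqOn_iff a x (productForm_zero _ _ _)).1 ?_⟩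
    refine eqOn_of_unitBalanced hS (unitBalanced_of_balanced hS hbal)
      (productForm_unitBalanced _ _ _ _) (by simp) (by simpa) fun i hi => ?_
    have hsingle : (Pi.single i 1 : I → ℕ) ≠ 0 := by simp
    have hxi : 0 < x (Pi.single i 1) / a := div_pos (hx _ (mem_erase.2 ⟨hsingle, hi⟩)) ha.1
    rw [productForm_single, mul_div_cancel₀ _ hb0, Real.exp_log hxi, mul_div_cancel₀ _ ha0,
      xeDef_of_ne_zero a x hsingle]
  · rintro ⟨ν, hν⟩ i k hk k' hk'
    have hxe := (xeDef_eqOn_iff a x (productForm_zero a b ν)).2 hν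
    have hmem : ∀ {m}, m ∈ edgesF Kbar i → m ∈ Kbar ∧ m - Pi.single i 1 ∈ Kbar := fun hm =>
      ⟨((mem_edgesF_iff hS).1 hm).1, hS tsub_le_self ((mem_edgesF_iff hS).1 hm).1⟩
    rw [hxe k (hmem hk).1, hxe k' (hmem hk').1, hxe _ (hmem hk).2, hxe _ (hmem hk').2]
    exact balanced_of_unitBalanced (by simpa) (productForm_unitBalanced a b ν Kbar) hk hk'

/-- the pairwise balance condition holds for every pair of edges
iff `x` has a product-form representation `x_k = (a/c_k)·exp(b ∑_i k_i ν_i)` on `K`,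
where `b = −log a`. -/
theorem balance_iff_product_form
    {I : Type*} [Fintype I] [DecidableEq I] [Nonempty I]
    (Kbar : Finset (I → ℕ))
    (h0 : (0 : I → ℕ) ∈ Kbar)
    (hunit : ∀ i : I, Pi.single i 1 ∈ Kbar)
    (hmono : ∀ k ∈ Kbar, ∀ k' : I → ℕ, (∀ i, k' i ≤ k i) → k' ∈ Kbar)
    (a : ℝ) (ha : a ∈ Set.Ioo (0 : ℝ) 1)
    (b : ℝ) (hb : b = -Real.log a)
    (x : (I → ℕ) → ℝ) (hx : ∀ k ∈ Kbar.erase 0, 0 < x k) :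
    (∀ i : I, ∀ k ∈ edgesF Kbar i, ∀ k' ∈ edgesF Kbar i,
        (k' i : ℝ) * xeDef a x (k - Pi.single i 1) * xeDef a x k' =
          (k i : ℝ) * xeDef a x k * xeDef a x (k' - Pi.single i 1)) ↔
      ∃ ν : I → ℝ, ∀ k ∈ Kbar.erase 0,
        x k = (a / confC k) * Real.exp (b * ∑ i, (k i : ℝ) * ν i) :=
  balance_iff_product_form_general Kbar hmono a ha b hb x hx
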